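/- arXiv:2408.00849 — 4 statements merged into one kernel-verified Lean document; each statement's English description precedes it below -/
import Mathlib

section
/- Density of Lipschitz paths transversal to countably many Lipschitz graphs: Let T > 0 and X ∈ ℝ. Let (y_m)_{m∈ℕ} be a countable family of Lipschitz functions defined on subintervals of [0,T] with values in ℝ, and set J := ⋃_m graph(y_m) ⊆ ℝ². Let 𝒢(T,X) := {φ : [0,T] → ℝ : φ Lipschitz, φ(T) = X}. Then the set ℱ := {φ ∈ 𝒢(T,X) : ℋ¹(graph(φ) ∩ J) = 0} is dense in 𝒢(T,X) for the W^{1,∞} topology: for every φ ∈ 𝒢(T,X) and every ε > 0 there exists ψ ∈ 𝒢(T,X) with ℋ¹(graph(ψ) ∩ J) = 0 such that sup_{t∈[0,T]} |φ(t) − ψ(t)| ≤ ε and φ − ψ is ε-Lipschitz, where ℋ¹ denotes the 1-dimensional Hausdorff measure on ℝ². -/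
open MeasureTheory Metric Set Filter
open scoped ENNReal NNReal Topology

noncomputable section

/-!
Perturb `φ` by a small linear function vanishing at `T`, `ψ t = φ t - a * (t - T)`. For a fixed
Lipschitz graph `y`, the coincidence sets `{t | φ t - y t = a * (t - T)}` of different slopes `a`
meet only at `t = T`, so only countably many of them have positive Lebesgue measure. Hence some
arbitrarily small slope makes every coincidence set Lebesgue null, and the graph of the Lipschitz
function `ψ` over a Lebesgue null set is `ℋ¹`-null.
-/

theorem Set.graphOn_inter_graphOn {α β : Type*} (f g : α → β) (s u : Set α) :
    s.graphOn f ∩ u.graphOn g = {t ∈ s ∩ u | f t = g t}.graphOn f := by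
  ext ⟨t, x⟩
  simp only [mem_inter_iff, mem_graphOn, mem_ofPred_eq]
  constructor
  · rintro ⟨⟨hs, rfl⟩, hu, hg⟩
    exact ⟨⟨⟨hs, hu⟩, hg.symm⟩, rfl⟩
  · rintro ⟨⟨⟨hs, hu⟩, hfg⟩, rfl⟩
    exact ⟨⟨hs, rfl⟩, hu, hfg.symm⟩

theorem LipschitzOnWith.hausdorffMeasure_graphOn_eq_zero {X Y : Type*} [EMetricSpace X]
    [MeasurableSpace X] [BorelSpace X] [EMetricSpace Y] [MeasurableSpace Y] [BorelSpace Y]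
    [SecondCountableTopologyEither X Y]
    {f : X → Y} {K : ℝ≥0} {s : Set X} (hf : LipschitzOnWith K f s) {d : ℝ} (hd : 0 ≤ d)
    (hs : μH[d] s = 0) : μH[d] (s.graphOn f) = 0 := by
  have hgraph : LipschitzOnWith (max 1 K) (fun t => (t, f t)) s :=
    LipschitzWith.id.lipschitzOnWith.prodMk hf
  refine le_antisymm ((hgraph.hausdorffMeasure_image_le hd).trans_eq ?_) bot_le
  rw [hs, mul_zero]

theorem countable_setOf_measure_eq_mul_sub_pos (μ : Measure ℝ) [SFinite μ]
    [NullSingletonClass μ] {h : ℝ → ℝ} (hh : Measurable h) (c : ℝ) :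
    {a : ℝ | 0 < μ {t | h t = a * (t - c)}}.Countable := by
  refine Measure.countable_meas_pos_of_disjoint_iUnion₀
    (fun a => (measurableSet_eq_fun hh (by fun_prop)).nullMeasurableSet) fun a b hab => ?_
  refine measure_mono_null (fun t (ht : h t = a * (t - c) ∧ h t = b * (t - c)) => ?_)
    (measure_singleton c)
  by_contra htc
  exact hab (mul_right_cancel₀ (sub_ne_zero.2 htc) (ht.1.symm.trans ht.2))

theorem lipschitzWith_mul_sub_const (a c : ℝ) : LipschitzWith ‖a‖₊ fun t => a * (t - c) :=
  LipschitzWith.of_dist_le_mul fun x y => by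
    rw [Real.dist_eq, Real.dist_eq, ← mul_sub, sub_sub_sub_cancel_right, abs_mul]
    rfl

theorem abs_mul_sub_le_of_mem_Icc {a T t : ℝ} (ht : t ∈ Icc 0 T) :
    |a * (t - T)| ≤ |a| * |T| := by
  rw [abs_mul, abs_sub_comm, abs_of_nonneg (sub_nonneg.2 ht.2),
    abs_of_nonneg (ht.1.trans ht.2)]
  exact mul_le_mul_of_nonneg_left (by linarith [ht.1]) (abs_nonneg a)

theorem dense_transversal_lipschitz_paths_general
    (T X : ℝ)
    (doms : ℕ → Set ℝ) (ys : ℕ → ℝ → ℝ)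
    (hys : ∀ m, ∃ K : ℝ≥0, LipschitzOnWith K (ys m) (doms m))
    (φ : ℝ → ℝ) (hφ : ∃ K : ℝ≥0, LipschitzOnWith K φ (Icc 0 T)) (hφT : φ T = X)
    (ε : ℝ) (hε : 0 < ε) :
    ∃ ψ : ℝ → ℝ,
      (∃ K : ℝ≥0, LipschitzOnWith K ψ (Icc 0 T)) ∧
      ψ T = X ∧
      μH[1] (Set.graphOn ψ (Icc 0 T) ∩ ⋃ m, Set.graphOn (ys m) (doms m)) = 0 ∧
      (∀ t ∈ Icc 0 T, |φ t - ψ t| ≤ ε) ∧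
      LipschitzOnWith ε.toNNReal (fun t => φ t - ψ t) (Icc 0 T) := by
  obtain ⟨K, hφK⟩ := hφ
  obtain ⟨φ', hφ'K, hφφ'⟩ := hφK.extend_real
  choose Ky hyK using hys
  choose y' hy'K hyy' using fun m => (hyK m).extend_real
  have hbad : (⋃ m, {a : ℝ | 0 < volume {t | (φ' - y' m) t = a * (t - T)}}).Countable :=
    countable_iUnion fun m => countable_setOf_measure_eq_mul_sub_pos volume
      (hφ'K.continuous.sub (hy'K m).continuous).measurable T
  obtain ⟨a, hgood, ha⟩ := (hbad.dense_compl ℝ).exists_mem_open isOpen_ball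
    ⟨0, mem_ball_self (div_pos hε (by positivity : 0 < |T| + 1))⟩
  rw [mem_ball_zero_iff, Real.norm_eq_abs, lt_div_iff₀ (by positivity)] at ha
  simp only [mem_compl_iff, mem_iUnion, mem_ofPred_eq, not_exists, not_lt,
    nonpos_iff_eq_zero] at hgood
  have hψK := hφK.sub (lipschitzWith_mul_sub_const a T).lipschitzOnWith
  refine ⟨fun t => φ t - a * (t - T), ⟨_, hψK⟩, by simp [hφT], ?_, fun t ht => ?_, ?_⟩
  · rw [inter_iUnion]
    refine measure_iUnion_null fun m => ?_
    rw [graphOn_inter_graphOn]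
    refine (hψK.mono ((sep_subset _ _).trans inter_subset_left)).hausdorffMeasure_graphOn_eq_zero
      zero_le_one ?_
    rw [hausdorffMeasure_real]
    refine measure_mono_null (fun t ⟨⟨hts, htd⟩, heq⟩ => ?_) (hgood m)
    simp only [mem_ofPred_eq, Pi.sub_apply, ← hφφ' hts, ← hyy' m htd, ← heq]
    ring
  · simp only [sub_sub_cancel]
    nlinarith [abs_mul_sub_le_of_mem_Icc (a := a) ht, abs_nonneg a]
  · simp only [sub_sub_cancel]
    refine ((lipschitzWith_mul_sub_const a T).weaken ?_).lipschitzOnWith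
    rw [← NNReal.coe_le_coe, coe_nnnorm, Real.norm_eq_abs, Real.coe_toNNReal _ hε.le]
    nlinarith [abs_nonneg a, abs_nonneg T]

/-- Density, in the W^{1,∞} sense, of Lipschitz paths ending at (T,X)
whose graphs meet a given countable union of Lipschitz graphs in a set of
1-dimensional Hausdorff measure zero. -/
theorem dense_transversal_lipschitz_paths
    (T X : ℝ) (hT : 0 < T)
    (doms : ℕ → Set ℝ) (ys : ℕ → ℝ → ℝ)
    (hdoms : ∀ m, doms m ⊆ Icc 0 T ∧ (doms m).OrdConnected)
    (hys : ∀ m, ∃ K : ℝ≥0, LipschitzOnWith K (ys m) (doms m))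
    (φ : ℝ → ℝ) (hφ : ∃ K : ℝ≥0, LipschitzOnWith K φ (Icc 0 T)) (hφT : φ T = X)
    (ε : ℝ) (hε : 0 < ε) :
    ∃ ψ : ℝ → ℝ,
      (∃ K : ℝ≥0, LipschitzOnWith K ψ (Icc 0 T)) ∧
      ψ T = X ∧
      μH[1] (Set.graphOn ψ (Icc 0 T) ∩ ⋃ m, Set.graphOn (ys m) (doms m)) = 0 ∧
      (∀ t ∈ Icc 0 T, |φ t - ψ t| ≤ ε) ∧
      LipschitzOnWith ε.toNNReal (fun t => φ t - ψ t) (Icc 0 T) :=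
  dense_transversal_lipschitz_paths_general T X doms ys hys φ hφ hφT ε hε

end
end

section
/- Second-order vanishing estimate for a C² error function: Let δ > 0, M ≥ 0, and let E : [−δ,δ]³ → ℝ be a C² function of the variables (σ, d, τ) whose mixed second partial derivatives ∂²E/∂σ∂τ and ∂²E/∂d∂τ are bounded in absolute value by M on [−δ,δ]³. Assume E(σ, d, 0) = 0 for all (σ,d) ∈ [−δ,δ]² and ∂E/∂τ(0, 0, τ) = 0 for all τ ∈ [−δ,δ]. Then |E(σ, d, τ)| ≤ 2M |τ| (|σ| + |d|) for all (σ, d, τ) ∈ [−δ,δ]³. -/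
/-!
For interior `τ`, the function `(σ, d) ↦ ∂_τ E(σ, d, τ)` vanishes at the origin and is
`M`-Lipschitz in `σ` and in `d` by the mean value theorem, so `|∂_τ E(σ, d, τ)| ≤ M (|σ| + |d|)`.
A last mean value step in `τ`, starting from `E(σ, d, 0) = 0`, gives
`|E(σ, d, τ)| ≤ M |τ| (|σ| + |d|)`.

The slice derivatives are two-sided `deriv`s, which say nothing about `E` at the faces of the
cube; at interior `τ` they agree with the derivative of `E` within the cube in direction
`(0, 0, 1)`, and that function is `C¹` on the closed cube.
-/

open Set

theorem Convex.abs_image_sub_le_of_abs_deriv_le {D : Set ℝ} (hD : Convex ℝ D) {f : ℝ → ℝ}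
    (hf : ContinuousOn f D) (hf' : DifferentiableOn ℝ f (interior D)) {C : ℝ}
    (hC : ∀ x ∈ interior D, |deriv f x| ≤ C) {x y : ℝ} (hx : x ∈ D) (hy : y ∈ D) :
    |f y - f x| ≤ C * |y - x| := by
  wlog hxy : x ≤ y generalizing x y
  · rw [abs_sub_comm, abs_sub_comm y]
    exact this hy hx (le_of_not_ge hxy)
  have upper := hD.image_sub_le_mul_sub_of_deriv_le hf hf' (fun z hz => (abs_le.1 (hC z hz)).2)
    x hx y hy hxy
  have lower := hD.mul_sub_le_image_sub_of_le_deriv hf hf' (fun z hz => (abs_le.1 (hC z hz)).1)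
    x hx y hy hxy
  rw [abs_of_nonneg (sub_nonneg.2 hxy)]
  exact abs_le.2 ⟨by linarith, upper⟩

theorem abs_image_sub_le_of_differentiableOn_Icc {f : ℝ → ℝ} {a b C : ℝ}
    (hf : DifferentiableOn ℝ f (Icc a b)) (hC : ∀ x ∈ Ioo a b, |deriv f x| ≤ C) {x y : ℝ}
    (hx : x ∈ Icc a b) (hy : y ∈ Icc a b) : |f y - f x| ≤ C * |y - x| := by
  rw [← interior_Icc] at hC
  exact (convex_Icc a b).abs_image_sub_le_of_abs_deriv_le hf.continuousOn
    (hf.mono interior_subset) hC hx hy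

section Cube

variable {δ : ℝ} {E : ℝ → ℝ → ℝ → ℝ} {a b t : ℝ}

theorem hasDerivAt_slice_of_differentiableOn
    (hE : DifferentiableOn ℝ (fun p : ℝ × ℝ × ℝ => E p.1 p.2.1 p.2.2)
      (Icc (-δ) δ ×ˢ Icc (-δ) δ ×ˢ Icc (-δ) δ))
    (ha : a ∈ Icc (-δ) δ) (hb : b ∈ Icc (-δ) δ) (ht : t ∈ Ioo (-δ) δ) :
    HasDerivAt (fun τ => E a b τ)
      (fderivWithin ℝ (fun p : ℝ × ℝ × ℝ => E p.1 p.2.1 p.2.2)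
        (Icc (-δ) δ ×ˢ Icc (-δ) δ ×ˢ Icc (-δ) δ) (a, b, t) (0, 0, 1)) t := by
  have hline : HasDerivAt (fun τ : ℝ => (a, b, τ)) ((0 : ℝ), (0 : ℝ), (1 : ℝ)) t :=
    (hasDerivAt_const t a).prodMk ((hasDerivAt_const t b).prodMk (hasDerivAt_id t))
  refine ((hE _ ⟨ha, hb, Ioo_subset_Icc_self ht⟩).hasFDerivWithinAt.comp_hasDerivWithinAt t
    hline.hasDerivWithinAt fun τ hτ => ⟨ha, hb, hτ⟩).hasDerivAt (Icc_mem_nhds ht.1 ht.2)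

theorem contDiffOn_fderivWithin_cube_apply (hδ : 0 < δ)
    (hE : ContDiffOn ℝ 2 (fun p : ℝ × ℝ × ℝ => E p.1 p.2.1 p.2.2)
      (Icc (-δ) δ ×ˢ Icc (-δ) δ ×ˢ Icc (-δ) δ)) (v : ℝ × ℝ × ℝ) :
    ContDiffOn ℝ 1 (fun q => fderivWithin ℝ (fun p : ℝ × ℝ × ℝ => E p.1 p.2.1 p.2.2)
      (Icc (-δ) δ ×ˢ Icc (-δ) δ ×ˢ Icc (-δ) δ) q v) (Icc (-δ) δ ×ˢ Icc (-δ) δ ×ˢ Icc (-δ) δ) := by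
  have hI : UniqueDiffOn ℝ (Icc (-δ) δ) := uniqueDiffOn_Icc (by linarith)
  exact (hE.fderivWithin (hI.prod (hI.prod hI)) le_rfl).clm_apply contDiffOn_const

theorem contDiffOn_deriv_slice_fst (hδ : 0 < δ)
    (hE : ContDiffOn ℝ 2 (fun p : ℝ × ℝ × ℝ => E p.1 p.2.1 p.2.2)
      (Icc (-δ) δ ×ˢ Icc (-δ) δ ×ˢ Icc (-δ) δ))
    (hb : b ∈ Icc (-δ) δ) (ht : t ∈ Ioo (-δ) δ) :
    ContDiffOn ℝ 1 (fun a => deriv (fun τ => E a b τ) t) (Icc (-δ) δ) := by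
  have hline : ContDiff ℝ 1 (fun a : ℝ => (a, b, t)) := by fun_prop
  refine ((contDiffOn_fderivWithin_cube_apply hδ hE (0, 0, 1)).comp hline.contDiffOn
    fun a ha => ⟨ha, hb, Ioo_subset_Icc_self ht⟩).congr fun a ha => ?_
  exact (hasDerivAt_slice_of_differentiableOn (hE.differentiableOn two_ne_zero) ha hb ht).deriv

theorem contDiffOn_deriv_slice_snd (hδ : 0 < δ)
    (hE : ContDiffOn ℝ 2 (fun p : ℝ × ℝ × ℝ => E p.1 p.2.1 p.2.2)
      (Icc (-δ) δ ×ˢ Icc (-δ) δ ×ˢ Icc (-δ) δ))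
    (ha : a ∈ Icc (-δ) δ) (ht : t ∈ Ioo (-δ) δ) :
    ContDiffOn ℝ 1 (fun b => deriv (fun τ => E a b τ) t) (Icc (-δ) δ) := by
  have hline : ContDiff ℝ 1 (fun b : ℝ => (a, b, t)) := by fun_prop
  refine ((contDiffOn_fderivWithin_cube_apply hδ hE (0, 0, 1)).comp hline.contDiffOn
    fun b hb => ⟨ha, hb, Ioo_subset_Icc_self ht⟩).congr fun b hb => ?_
  exact (hasDerivAt_slice_of_differentiableOn (hE.differentiableOn two_ne_zero) ha hb ht).deriv

theorem abs_deriv_slice_le {M σ d : ℝ} (hδ : 0 < δ)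
    (hE : ContDiffOn ℝ 2 (fun p : ℝ × ℝ × ℝ => E p.1 p.2.1 p.2.2)
      (Icc (-δ) δ ×ˢ Icc (-δ) δ ×ˢ Icc (-δ) δ))
    (hmix₁ : ∀ σ ∈ Icc (-δ) δ, ∀ d ∈ Icc (-δ) δ, ∀ τ ∈ Icc (-δ) δ,
      |deriv (fun σ' => deriv (fun τ' => E σ' d τ') τ) σ| ≤ M)
    (hmix₂ : ∀ σ ∈ Icc (-δ) δ, ∀ d ∈ Icc (-δ) δ, ∀ τ ∈ Icc (-δ) δ,
      |deriv (fun d' => deriv (fun τ' => E σ d' τ') τ) d| ≤ M)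
    (hzero' : ∀ τ ∈ Icc (-δ) δ, deriv (fun τ' => E 0 0 τ') τ = 0)
    (hσ : σ ∈ Icc (-δ) δ) (hd : d ∈ Icc (-δ) δ) (ht : t ∈ Ioo (-δ) δ) :
    |deriv (fun τ => E σ d τ) t| ≤ M * (|σ| + |d|) := by
  have h0 : (0 : ℝ) ∈ Icc (-δ) δ := ⟨by linarith, hδ.le⟩
  have ht' := Ioo_subset_Icc_self ht
  have hstep₁ : |deriv (fun τ => E σ d τ) t - deriv (fun τ => E 0 d τ) t| ≤ M * |σ - 0| :=
    abs_image_sub_le_of_differentiableOn_Icc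
      ((contDiffOn_deriv_slice_fst hδ hE hd ht).differentiableOn one_ne_zero)
      (fun a ha => hmix₁ a (Ioo_subset_Icc_self ha) d hd t ht') h0 hσ
  have hstep₂ : |deriv (fun τ => E 0 d τ) t - deriv (fun τ => E 0 0 τ) t| ≤ M * |d - 0| :=
    abs_image_sub_le_of_differentiableOn_Icc
      ((contDiffOn_deriv_slice_snd hδ hE h0 ht).differentiableOn one_ne_zero)
      (fun b hb => hmix₂ 0 h0 b (Ioo_subset_Icc_self hb) t ht') h0 hd
  have htriangle := abs_sub_le (deriv (fun τ => E σ d τ) t) (deriv (fun τ => E 0 d τ) t)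
    (deriv (fun τ => E 0 0 τ) t)
  simp only [hzero' t ht', sub_zero] at htriangle hstep₁ hstep₂
  linarith

end Cube

/-- Second-order vanishing estimate for a C² error function:
if E(σ,d,0) = 0, ∂_τ E(0,0,τ) = 0 and the mixed second partials ∂²E/∂σ∂τ, ∂²E/∂d∂τ
are bounded by M on the cube [−δ,δ]³, then |E(σ,d,τ)| ≤ 2M|τ|(|σ|+|d|). -/
theorem second_order_vanishing_estimate
    (δ M : ℝ) (hδ : 0 < δ) (hM : 0 ≤ M)
    (E : ℝ → ℝ → ℝ → ℝ)
    (hE : ContDiffOn ℝ 2 (fun p : ℝ × ℝ × ℝ => E p.1 p.2.1 p.2.2)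
      (Icc (-δ) δ ×ˢ Icc (-δ) δ ×ˢ Icc (-δ) δ))
    (hmix₁ : ∀ σ ∈ Icc (-δ) δ, ∀ d ∈ Icc (-δ) δ, ∀ τ ∈ Icc (-δ) δ,
      |deriv (fun σ' => deriv (fun τ' => E σ' d τ') τ) σ| ≤ M)
    (hmix₂ : ∀ σ ∈ Icc (-δ) δ, ∀ d ∈ Icc (-δ) δ, ∀ τ ∈ Icc (-δ) δ,
      |deriv (fun d' => deriv (fun τ' => E σ d' τ') τ) d| ≤ M)
    (hzero : ∀ σ ∈ Icc (-δ) δ, ∀ d ∈ Icc (-δ) δ, E σ d 0 = 0)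
    (hzero' : ∀ τ ∈ Icc (-δ) δ, deriv (fun τ' => E 0 0 τ') τ = 0) :
    ∀ σ ∈ Icc (-δ) δ, ∀ d ∈ Icc (-δ) δ, ∀ τ ∈ Icc (-δ) δ,
      |E σ d τ| ≤ 2 * M * |τ| * (|σ| + |d|) := by
  intro σ hσ d hd τ hτ
  have hline : Differentiable ℝ (fun τ : ℝ => (σ, d, τ)) := by fun_prop
  have hslice : DifferentiableOn ℝ (fun τ => E σ d τ) (Icc (-δ) δ) :=
    (hE.differentiableOn two_ne_zero).comp hline.differentiableOn fun τ hτ => ⟨hσ, hd, hτ⟩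
  have hmvt := abs_image_sub_le_of_differentiableOn_Icc hslice
    (fun t ht => abs_deriv_slice_le hδ hE hmix₁ hmix₂ hzero' hσ hd ht) ⟨by linarith, hδ.le⟩ hτ
  rw [hzero σ hσ d hd, sub_zero, sub_zero] at hmvt
  have : 0 ≤ M * |τ| * (|σ| + |d|) := by positivity
  linarith
end

section
/- Piecewise Gronwall-type inequality with jumps in the weight: Let T > 0, C ≥ 0, m ≥ 0, and let 0 = s₀ < s₁ < ⋯ < s_n < s_{n+1} = T. Let z : [0,T] → [0,∞) be continuous on [0,T] and continuously differentiable on each open interval (s_i, s_{i+1}), and let Φ : [0,T] → [0,∞) be continuously differentiable and nondecreasing on each (s_i, s_{i+1}), with one-sided limits Φ(s_i−), Φ(s_i+), Φ(0+), Φ(T−) existing. Assume z′(t) + C Φ′(t) z(t) ≥ m for all t in each (s_i, s_{i+1}). Then e^{C Φ(T−)} z(T) + Σ_{i=1}^{n} z(s_i) ( e^{C Φ(s_i−)} − e^{C Φ(s_i+)} ) ≥ e^{C Φ(0+)} z(0) + m T. -/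
/-!
On each interval `(sᵢ, sᵢ₊₁)` the integrating factor makes `t ↦ e^{CΦ(t)} z(t) - m t` nondecreasing:
its derivative is `e^{CΦ}(z' + CΦ'z) - m ≥ (e^{CΦ} - 1) m ≥ 0`. Comparing its one-sided limits at the
endpoints gives `e^{CΦ(sᵢ+)} z(sᵢ) + m (sᵢ₊₁ - sᵢ) ≤ e^{CΦ(sᵢ₊₁-)} z(sᵢ₊₁)`, and summing over `i`
telescopes, the jumps of `Φ` at the interior points leaving the sum on the right-hand side.
-/

open Set Filter
open scoped Topology

theorem MonotoneOn.le_of_tendsto_nhdsGT_nhdsLT {α β : Type*} [LinearOrder α] [TopologicalSpace α]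
    [OrderTopology α] [DenselyOrdered α] [TopologicalSpace β] [Preorder β] [OrderClosedTopology β]
    {f : α → β} {a b : α} {L R : β} (hab : a < b) (hf : MonotoneOn f (Ioo a b))
    (ha : Tendsto f (𝓝[>] a) (𝓝 L)) (hb : Tendsto f (𝓝[<] b) (𝓝 R)) : L ≤ R := by
  have := nhdsGT_neBot_of_exists_gt ⟨b, hab⟩
  have := nhdsLT_neBot_of_exists_lt ⟨a, hab⟩
  obtain ⟨c, hac, hcb⟩ := exists_between hab
  have hL : L ≤ f c := le_of_tendsto ha <| eventually_of_mem (Ioo_mem_nhdsGT hac)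
    fun t ht => hf ⟨ht.1, ht.2.trans hcb⟩ ⟨hac, hcb⟩ ht.2.le
  have hR : f c ≤ R := ge_of_tendsto hb <| eventually_of_mem (Ioo_mem_nhdsLT hcb)
    fun t ht => hf ⟨hac, hcb⟩ ⟨hac.trans ht.1, ht.2⟩ ht.1.le
  exact hL.trans hR

theorem add_sub_le_add_sum_Icc_sub {A B x : ℕ → ℝ} (n : ℕ)
    (h : ∀ i ≤ n, B i + (x (i + 1) - x i) ≤ A (i + 1)) :
    B 0 + (x (n + 1) - x 0) ≤ A (n + 1) + ∑ i ∈ Finset.Icc 1 n, (A i - B i) := by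
  induction n with
  | zero => simpa using h 0 le_rfl
  | succ n ih =>
    rw [Finset.sum_Icc_succ_top (by omega)]
    linarith [ih fun i hi => h i (by omega), h (n + 1) le_rfl]

section IntegratingFactor

variable {a b C m : ℝ} {z Φ z' Φ' : ℝ → ℝ}

theorem monotoneOn_exp_mul_sub_mul (hm : 0 ≤ m) (hCΦ : ∀ t ∈ Ioo a b, 0 ≤ C * Φ t)
    (hz : ∀ t ∈ Ioo a b, HasDerivAt z (z' t) t) (hΦ : ∀ t ∈ Ioo a b, HasDerivAt Φ (Φ' t) t)
    (hineq : ∀ t ∈ Ioo a b, m ≤ z' t + C * Φ' t * z t) :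
    MonotoneOn (fun t => Real.exp (C * Φ t) * z t - m * t) (Ioo a b) := by
  have hderiv : ∀ t ∈ Ioo a b, HasDerivAt (fun t => Real.exp (C * Φ t) * z t - m * t)
      (Real.exp (C * Φ t) * (z' t + C * Φ' t * z t) - m) t := fun t ht =>
    ((((hΦ t ht).const_mul C).exp.mul (hz t ht)).sub ((hasDerivAt_id t).const_mul m)).congr_deriv
      (by ring)
  refine monotoneOn_of_hasDerivWithinAt_nonneg (convex_Ioo a b)
    (f' := fun t => Real.exp (C * Φ t) * (z' t + C * Φ' t * z t) - m)
    (fun t ht => (hderiv t ht).continuousAt.continuousWithinAt) ?_ ?_ <;> rw [interior_Ioo]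
  · exact fun t ht => (hderiv t ht).hasDerivWithinAt
  · intro t ht
    have hexp : 1 ≤ Real.exp (C * Φ t) := Real.one_le_exp (hCΦ t ht)
    nlinarith [hineq t ht]

theorem exp_mul_add_le_of_tendsto_of_le_deriv {φa φb za zb : ℝ} (hab : a < b) (hm : 0 ≤ m)
    (hCΦ : ∀ t ∈ Ioo a b, 0 ≤ C * Φ t)
    (hz : ∀ t ∈ Ioo a b, HasDerivAt z (z' t) t) (hΦ : ∀ t ∈ Ioo a b, HasDerivAt Φ (Φ' t) t)
    (hza : Tendsto z (𝓝[>] a) (𝓝 za)) (hzb : Tendsto z (𝓝[<] b) (𝓝 zb))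
    (hΦa : Tendsto Φ (𝓝[>] a) (𝓝 φa)) (hΦb : Tendsto Φ (𝓝[<] b) (𝓝 φb))
    (hineq : ∀ t ∈ Ioo a b, m ≤ z' t + C * Φ' t * z t) :
    Real.exp (C * φa) * za + m * (b - a) ≤ Real.exp (C * φb) * zb := by
  have hlim : ∀ {l : Filter ℝ} {φ ζ c : ℝ}, Tendsto Φ l (𝓝 φ) → Tendsto z l (𝓝 ζ) →
      Tendsto id l (𝓝 c) → Tendsto (fun t => Real.exp (C * Φ t) * z t - m * t) l
        (𝓝 (Real.exp (C * φ) * ζ - m * c)) := fun hΦ hz hid =>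
    (((tendsto_const_nhds.mul hΦ).rexp).mul hz).sub (tendsto_const_nhds.mul hid)
  have := (monotoneOn_exp_mul_sub_mul hm hCΦ hz hΦ hineq).le_of_tendsto_nhdsGT_nhdsLT hab
    (hlim hΦa hza nhdsWithin_le_nhds) (hlim hΦb hzb nhdsWithin_le_nhds)
  linarith

end IntegratingFactor

theorem piecewise_gronwall_with_jumps_general
    (T C m : ℝ) (hC : 0 ≤ C) (hm : 0 ≤ m)
    (n : ℕ) (s : ℕ → ℝ) (hs0 : s 0 = 0) (hsT : s (n + 1) = T)
    (hmono : ∀ i ≤ n, s i < s (i + 1))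
    (z Φ z' Φ' : ℝ → ℝ) (Φm Φp : ℕ → ℝ)
    (hΦ_nonneg : ∀ t ∈ Icc 0 T, 0 ≤ Φ t)
    (hz_cont : ContinuousOn z (Icc 0 T))
    (hz_deriv : ∀ i ≤ n, ∀ t ∈ Ioo (s i) (s (i + 1)), HasDerivAt z (z' t) t)
    (hΦ_deriv : ∀ i ≤ n, ∀ t ∈ Ioo (s i) (s (i + 1)), HasDerivAt Φ (Φ' t) t)
    (hΦp : ∀ i ≤ n, Tendsto Φ (nhdsWithin (s i) (Ioi (s i))) (nhds (Φp i)))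
    (hΦm : ∀ i, 1 ≤ i → i ≤ n + 1 → Tendsto Φ (nhdsWithin (s i) (Iio (s i))) (nhds (Φm i)))
    (hmain : ∀ i ≤ n, ∀ t ∈ Ioo (s i) (s (i + 1)), m ≤ z' t + C * Φ' t * z t) :
    Real.exp (C * Φp 0) * z 0 + m * T ≤
      Real.exp (C * Φm (n + 1)) * z T
        + ∑ i ∈ Finset.Icc 1 n, z (s i) * (Real.exp (C * Φm i) - Real.exp (C * Φp i)) := by
  have hs : MonotoneOn s (Iic (n + 1)) :=
    (strictMonoOn_Iic_of_lt_succ fun i hi => hmono i (Nat.lt_succ_iff.mp hi)).monotoneOn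
  have hsub : ∀ i ≤ n, Icc (s i) (s (i + 1)) ⊆ Icc 0 T := fun i hi => by
    rw [← hs0, ← hsT]
    exact Icc_subset_Icc (hs (mem_Iic.2 (by omega)) (mem_Iic.2 (by omega)) (Nat.zero_le i))
      (hs (mem_Iic.2 (by omega)) (mem_Iic.2 le_rfl) (by omega))
  have hstep : ∀ i ≤ n, Real.exp (C * Φp i) * z (s i) + (m * s (i + 1) - m * s i)
      ≤ Real.exp (C * Φm (i + 1)) * z (s (i + 1)) := fun i hi => by
    have hab := hmono i hi
    have hzc := hz_cont.mono (hsub i hi)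
    have := exp_mul_add_le_of_tendsto_of_le_deriv hab hm
      (fun t ht => mul_nonneg hC (hΦ_nonneg t (hsub i hi (Ioo_subset_Icc_self ht))))
      (hz_deriv i hi) (hΦ_deriv i hi)
      ((hzc _ (left_mem_Icc.2 hab.le)).mono_of_mem_nhdsWithin (Icc_mem_nhdsGT hab))
      ((hzc _ (right_mem_Icc.2 hab.le)).mono_of_mem_nhdsWithin (Icc_mem_nhdsLT hab))
      (hΦp i hi) (hΦm (i + 1) (by omega) (by omega)) (hmain i hi)
    linarith
  have := add_sub_le_add_sum_Icc_sub (A := fun i => Real.exp (C * Φm i) * z (s i))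
    (B := fun i => Real.exp (C * Φp i) * z (s i)) (x := fun i => m * s i) n hstep
  simp only [hs0, hsT, mul_zero, sub_zero] at this
  convert this using 3 with i
  ring

/-- Piecewise Gronwall-type inequality with jumps in the weight:
if z′ + C Φ′ z ≥ m on each interval (sᵢ, sᵢ₊₁) of a partition 0 = s₀ < … < s_{n+1} = T,
with z continuous and nonnegative and Φ nonnegative, nondecreasing and C¹ on each open
subinterval, and with one-sided limits Φ(sᵢ±), then
e^{CΦ(T−)} z(T) + Σ_{i=1}^n z(sᵢ)(e^{CΦ(sᵢ−)} − e^{CΦ(sᵢ+)}) ≥ e^{CΦ(0+)} z(0) + mT. -/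
theorem piecewise_gronwall_with_jumps
    (T C m : ℝ) (hT : 0 < T) (hC : 0 ≤ C) (hm : 0 ≤ m)
    (n : ℕ) (s : ℕ → ℝ) (hs0 : s 0 = 0) (hsT : s (n + 1) = T)
    (hmono : ∀ i ≤ n, s i < s (i + 1))
    (z Φ z' Φ' : ℝ → ℝ) (Φm Φp : ℕ → ℝ)
    (hz_nonneg : ∀ t ∈ Icc 0 T, 0 ≤ z t)
    (hΦ_nonneg : ∀ t ∈ Icc 0 T, 0 ≤ Φ t)
    (hz_cont : ContinuousOn z (Icc 0 T))
    (hz_deriv : ∀ i ≤ n, ∀ t ∈ Ioo (s i) (s (i + 1)), HasDerivAt z (z' t) t)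
    (hz'_cont : ∀ i ≤ n, ContinuousOn z' (Ioo (s i) (s (i + 1))))
    (hΦ_deriv : ∀ i ≤ n, ∀ t ∈ Ioo (s i) (s (i + 1)), HasDerivAt Φ (Φ' t) t)
    (hΦ'_cont : ∀ i ≤ n, ContinuousOn Φ' (Ioo (s i) (s (i + 1))))
    (hΦ_mono : ∀ i ≤ n, MonotoneOn Φ (Ioo (s i) (s (i + 1))))
    (hΦp : ∀ i ≤ n, Tendsto Φ (nhdsWithin (s i) (Ioi (s i))) (nhds (Φp i)))
    (hΦm : ∀ i, 1 ≤ i → i ≤ n + 1 → Tendsto Φ (nhdsWithin (s i) (Iio (s i))) (nhds (Φm i)))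
    (hmain : ∀ i ≤ n, ∀ t ∈ Ioo (s i) (s (i + 1)), m ≤ z' t + C * Φ' t * z t) :
    Real.exp (C * Φp 0) * z 0 + m * T ≤
      Real.exp (C * Φm (n + 1)) * z T
        + ∑ i ∈ Finset.Icc 1 n, z (s i) * (Real.exp (C * Φm i) - Real.exp (C * Φp i)) :=
  piecewise_gronwall_with_jumps_general T C m hC hm n s hs0 hsT hmono z Φ z' Φ' Φm Φp hΦ_nonneg
    hz_cont hz_deriv hΦ_deriv hΦp hΦm hmain
end

section
/- From a one-sided Oleinik inequality to a pointwise bound by local averages: Let a < b, A ≥ 0, B ≥ 0, and let w : [a,b] → ℝ be integrable and satisfy w(y) ≤ w(x) + A (y − x) + B for all a ≤ x ≤ y ≤ b. Then for every l > 0 and every x with [x − l, x + l] ⊆ [a,b], |w(x)| ≤ max( |(1/l) ∫_{x−l}^{x} w(z) dz| , |(1/l) ∫_{x}^{x+l} w(z) dz| ) + A l + B. -/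
open MeasureTheory Metric Set Filter
open scoped ENNReal NNReal Topology

noncomputable section

/-- From a one-sided Oleinik inequality to a pointwise bound by local
averages: if w(y) ≤ w(x) + A(y−x) + B for a ≤ x ≤ y ≤ b, then for [x−l,x+l] ⊆ [a,b],
|w(x)| ≤ max(|avg over [x−l,x]|, |avg over [x,x+l]|) + A l + B. -/
theorem oleinik_to_pointwise_bound
    (a b A B : ℝ) (hab : a < b) (hA : 0 ≤ A) (hB : 0 ≤ B)
    (w : ℝ → ℝ) (hint : IntegrableOn w (Icc a b))
    (holeinik : ∀ x y : ℝ, a ≤ x → x ≤ y → y ≤ b → w y ≤ w x + A * (y - x) + B) :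
    ∀ l : ℝ, 0 < l → ∀ x : ℝ, a ≤ x - l → x + l ≤ b →
      |w x| ≤ max |(1 / l) * ∫ z in (x - l)..x, w z| |(1 / l) * ∫ z in x..(x + l), w z|
        + A * l + B := by
  intro l hl x hxl hxr
  have hlx : x - l ≤ x := by linarith
  have hxr' : x ≤ x + l := by linarith
  have hax : a ≤ x := by linarith
  have hxb : x ≤ b := by linarith
  -- integrability on the two subintervals
  have hintL : IntervalIntegrable w volume (x - l) x := by
    refine (hint.mono_set ?_).intervalIntegrable
    rw [uIcc_of_le hlx]
    exact Icc_subset_Icc hxl hxb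
  have hintR : IntervalIntegrable w volume x (x + l) := by
    refine (hint.mono_set ?_).intervalIntegrable
    rw [uIcc_of_le hxr']
    exact Icc_subset_Icc hax hxr
  -- lower bound on the left average
  have h1 : ∀ z ∈ Icc (x - l) x, w x - A * l - B ≤ w z := by
    intro z hz
    have := holeinik z x (by linarith [hz.1]) hz.2 hxb
    nlinarith [hz.1, hz.2]
  have hL : l * (w x - A * l - B) ≤ ∫ z in (x - l)..x, w z := by
    have h := intervalIntegral.integral_mono_on hlx
      (intervalIntegrable_const (c := w x - A * l - B)) hintL h1
    simp only [intervalIntegral.integral_const, smul_eq_mul] at h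
    nlinarith [h]
  -- upper bound on the right average
  have h2 : ∀ z ∈ Icc x (x + l), w z ≤ w x + A * l + B := by
    intro z hz
    have := holeinik x z hax hz.1 (by linarith [hz.2])
    nlinarith [hz.1, hz.2]
  have hR : (∫ z in x..(x + l), w z) ≤ l * (w x + A * l + B) := by
    have h := intervalIntegral.integral_mono_on hxr' hintR
      (intervalIntegrable_const (c := w x + A * l + B)) h2
    simp only [intervalIntegral.integral_const, smul_eq_mul] at h
    nlinarith [h]
  set IL := ∫ z in (x - l)..x, w z with hIL
  set IR := ∫ z in x..(x + l), w z with hIR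
  have hlne : l ≠ 0 := ne_of_gt hl
  have hLavg : w x - A * l - B ≤ (1 / l) * IL := by
    rw [div_mul_eq_mul_div, le_div_iff₀ hl, one_mul]
    nlinarith [hL]
  have hRavg : (1 / l) * IR ≤ w x + A * l + B := by
    rw [div_mul_eq_mul_div, div_le_iff₀ hl, one_mul]
    nlinarith [hR]
  have habsL : (1 / l) * IL ≤ max |(1 / l) * IL| |(1 / l) * IR| :=
    le_trans (le_abs_self _) (le_max_left _ _)
  have habsR : -((1 / l) * IR) ≤ max |(1 / l) * IL| |(1 / l) * IR| :=
    le_trans (neg_le_abs _) (le_max_right _ _)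
  rw [abs_le]
  constructor
  · linarith
  · linarith

end
end
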